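/- The Cartan invariant satisfies the identity C = (3/2)∂_{x₁}K₁ + ∂_{x₂}F·∂_{x₂}K₁ + (3/2)∂_{x₂}K₀, where C = X_F²(∂²_{x₂}F) − X_F(∂_{x₁}∂_{x₂}F) + ∂_{x₀}∂_{x₂}F and K₀, K₁ are defined as usual. -/

import Mathlib

noncomputable section

/-- ℝ⁴ with coordinates (t, x₀, x₁, x₂). -/
abbrev R4 := ℝ × ℝ × ℝ × ℝ

/-- The total derivative vector field X_F = ∂_t + x₁∂_{x₀} + x₂∂_{x₁} + F∂_{x₂}. -/
def XFvec (F : R4 → ℝ) (p : R4) : R4 := (1, p.2.2.1, p.2.2.2, F p)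

/-- X_F acting as a derivation on functions. -/
def XF (F : R4 → ℝ) (f : R4 → ℝ) (p : R4) : ℝ := fderiv ℝ f p (XFvec F p)

/-- Directional (partial) derivative in the direction `v`. -/
def pd (v : R4) (f : R4 → ℝ) (p : R4) : ℝ := fderiv ℝ f p v

def e0 : R4 := (0, 1, 0, 0)  -- ∂_{x₀}
def e1 : R4 := (0, 0, 1, 0)  -- ∂_{x₁}
def e2 : R4 := (0, 0, 0, 1)  -- ∂_{x₂}

/-- K₁ = ∂_{x₁}F − X_F(∂_{x₂}F) + (1/3)(∂_{x₂}F)². -/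
def K1 (F : R4 → ℝ) : R4 → ℝ := fun p =>
  pd e1 F p - XF F (pd e2 F) p + (1/3) * (pd e2 F p)^2

/-- K₀ = ∂_{x₀}F − X_F(∂_{x₁}F) + (1/3)∂_{x₁}F∂_{x₂}F + (2/3)X_F²(∂_{x₂}F)
        − (2/3)X_F(∂_{x₂}F)∂_{x₂}F + (2/27)(∂_{x₂}F)³. -/
def K0 (F : R4 → ℝ) : R4 → ℝ := fun p =>
  pd e0 F p - XF F (pd e1 F) p + (1/3) * pd e1 F p * pd e2 F p
    + (2/3) * XF F (XF F (pd e2 F)) p - (2/3) * XF F (pd e2 F) p * pd e2 F p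
    + (2/27) * (pd e2 F p)^3

/-- The Wünschmann invariant. -/
def Wun (F : R4 → ℝ) : R4 → ℝ := fun p =>
  pd e0 F p - (1/2) * XF F (pd e1 F) p + (1/3) * pd e1 F p * pd e2 F p
    + (1/6) * XF F (XF F (pd e2 F)) p - (1/3) * XF F (pd e2 F) p * pd e2 F p
    + (2/27) * (pd e2 F p)^3

/-- The Cartan invariant C = X_F²(∂²_{x₂}F) − X_F(∂_{x₁}∂_{x₂}F) + ∂_{x₀}∂_{x₂}F. -/
def CartanC (F : R4 → ℝ) : R4 → ℝ := fun p =>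
  XF F (XF F (pd e2 (pd e2 F))) p - XF F (pd e1 (pd e2 F)) p + pd e0 (pd e2 F) p


-- Auxiliary infrastructure ---------------------------------------------------

def et : R4 := (1, 0, 0, 0)  -- ∂_t

@[fun_prop]
theorem contDiff_pd {f : R4 → ℝ} (hf : ContDiff ℝ (⊤ : ℕ∞) f) (v : R4) :
    ContDiff ℝ (⊤ : ℕ∞) (pd v f) := by
  unfold pd
  exact (hf.fderiv_right (le_refl _)).clm_apply contDiff_const

@[fun_prop]
theorem differentiable_pd {f : R4 → ℝ} (hf : ContDiff ℝ (⊤ : ℕ∞) f) (v : R4) :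
    Differentiable ℝ (pd v f) :=
  (contDiff_pd hf v).differentiable (by simp)

theorem XF_eq (F f : R4 → ℝ) :
    XF F f = fun p => pd et f p + p.2.2.1 * pd e0 f p + p.2.2.2 * pd e1 f p
      + F p * pd e2 f p := by
  funext p
  have h : XFvec F p = et + p.2.2.1 • e0 + p.2.2.2 • e1 + F p • e2 := by
    simp [XFvec, et, e0, e1, e2, Prod.ext_iff]
  simp only [XF, pd, h, map_add, map_smul, smul_eq_mul]

theorem pd_add {f g : R4 → ℝ} {q : R4} (hf : DifferentiableAt ℝ f q)
    (hg : DifferentiableAt ℝ g q) (v : R4) :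
    pd v (fun p => f p + g p) q = pd v f q + pd v g q := by
  simp only [pd, fderiv_fun_add hf hg]; rfl

theorem pd_sub {f g : R4 → ℝ} {q : R4} (hf : DifferentiableAt ℝ f q)
    (hg : DifferentiableAt ℝ g q) (v : R4) :
    pd v (fun p => f p - g p) q = pd v f q - pd v g q := by
  simp only [pd, fderiv_fun_sub hf hg]; rfl

theorem pd_mul {f g : R4 → ℝ} {q : R4} (hf : DifferentiableAt ℝ f q)
    (hg : DifferentiableAt ℝ g q) (v : R4) :
    pd v (fun p => f p * g p) q = f q * pd v g q + g q * pd v f q := by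
  simp only [pd, fderiv_fun_mul hf hg]; rfl

theorem pd_const_mul {g : R4 → ℝ} {q : R4} (hg : DifferentiableAt ℝ g q) (c : ℝ) (v : R4) :
    pd v (fun p => c * g p) q = c * pd v g q := by
  simp only [pd, fderiv_const_mul hg]; rfl

theorem pd_const (c : ℝ) (v q : R4) : pd v (fun _ => c) q = 0 := by
  simp [pd]

theorem pd_coord1 (v : R4) (q : R4) : pd v (fun p : R4 => p.2.2.1) q = v.2.2.1 := by
  have h : (fun p : R4 => p.2.2.1)
      = fun p => ((ContinuousLinearMap.fst ℝ ℝ ℝ).comp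
          ((ContinuousLinearMap.snd ℝ ℝ (ℝ × ℝ)).comp
            (ContinuousLinearMap.snd ℝ ℝ (ℝ × ℝ × ℝ)))) p := rfl
  rw [pd, h, ContinuousLinearMap.fderiv]; rfl

theorem pd_coord2 (v : R4) (q : R4) : pd v (fun p : R4 => p.2.2.2) q = v.2.2.2 := by
  have h : (fun p : R4 => p.2.2.2)
      = fun p => ((ContinuousLinearMap.snd ℝ ℝ ℝ).comp
          ((ContinuousLinearMap.snd ℝ ℝ (ℝ × ℝ)).comp
            (ContinuousLinearMap.snd ℝ ℝ (ℝ × ℝ × ℝ)))) p := rfl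
  rw [pd, h, ContinuousLinearMap.fderiv]; rfl

theorem pd_comm {f : R4 → ℝ} (hf : ContDiff ℝ (⊤ : ℕ∞) f) (v w : R4) (q : R4) :
    pd v (pd w f) q = pd w (pd v f) q := by
  have hsymm : IsSymmSndFDerivAt ℝ f q :=
    hf.contDiffAt.isSymmSndFDerivAt (by
      rw [minSmoothness_of_isRCLikeNormedField]
      change ((2:ℕ∞) : WithTop ℕ∞) ≤ _
      exact WithTop.coe_le_coe.mpr le_top)
  have hdf : DifferentiableAt ℝ (fderiv ℝ f) q :=
    ((hf.fderiv_right (m := (⊤:ℕ∞)) (by exact_mod_cast le_refl _)).differentiable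
      (by simp)).differentiableAt
  have key : ∀ u w' : R4, pd u (pd w' f) q = fderiv ℝ (fderiv ℝ f) q u w' := by
    intro u w'
    have h0 : pd u (pd w' f) q = fderiv ℝ (fun y => (fderiv ℝ f y) w') q u := rfl
    rw [h0, fderiv_clm_apply hdf (differentiableAt_const w')]
    simp
  rw [key v w, hsymm.eq v w, ← key w v]

theorem pdc_e0_et {f : R4 → ℝ} (hf : ContDiff ℝ (⊤ : ℕ∞) f) :
    pd e0 (pd et f) = pd et (pd e0 f) := funext fun q => pd_comm hf _ _ q
theorem pdc_e1_et {f : R4 → ℝ} (hf : ContDiff ℝ (⊤ : ℕ∞) f) :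
    pd e1 (pd et f) = pd et (pd e1 f) := funext fun q => pd_comm hf _ _ q
theorem pdc_e2_et {f : R4 → ℝ} (hf : ContDiff ℝ (⊤ : ℕ∞) f) :
    pd e2 (pd et f) = pd et (pd e2 f) := funext fun q => pd_comm hf _ _ q
theorem pdc_e1_e0 {f : R4 → ℝ} (hf : ContDiff ℝ (⊤ : ℕ∞) f) :
    pd e1 (pd e0 f) = pd e0 (pd e1 f) := funext fun q => pd_comm hf _ _ q
theorem pdc_e2_e0 {f : R4 → ℝ} (hf : ContDiff ℝ (⊤ : ℕ∞) f) :
    pd e2 (pd e0 f) = pd e0 (pd e2 f) := funext fun q => pd_comm hf _ _ q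
theorem pdc_e2_e1 {f : R4 → ℝ} (hf : ContDiff ℝ (⊤ : ℕ∞) f) :
    pd e2 (pd e1 f) = pd e1 (pd e2 f) := funext fun q => pd_comm hf _ _ q

set_option maxHeartbeats 2000000 in
/-- The Cartan invariant satisfies
C = (3/2)∂_{x₁}K₁ + ∂_{x₂}F·∂_{x₂}K₁ + (3/2)∂_{x₂}K₀. -/
theorem cartan_identity (F : R4 → ℝ) (hF : ContDiff ℝ (⊤ : ℕ∞) F) (p : R4) :
    CartanC F p = (3/2) * pd e1 (K1 F) p + pd e2 F p * pd e2 (K1 F) p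
      + (3/2) * pd e2 (K0 F) p := by
  have hF' : ContDiff ℝ (⊤ : ℕ∞) F := hF.of_le (by simp)
  have hFd : Differentiable ℝ F := hF'.differentiable (by simp)
  have h2 : ∀ a : ℝ, a^2 = a * a := fun a => sq a
  have h3 : ∀ a : ℝ, a^3 = a * (a * a) := fun a => by ring
  have hK1 : K1 F = fun p => pd e1 F p - XF F (pd e2 F) p + (1/3) * (pd e2 F p)^2 := rfl
  have hK0 : K0 F = fun p => pd e0 F p - XF F (pd e1 F) p + (1/3) * pd e1 F p * pd e2 F p
      + (2/3) * XF F (XF F (pd e2 F)) p - (2/3) * XF F (pd e2 F) p * pd e2 F p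
      + (2/27) * (pd e2 F p)^3 := rfl
  simp only [CartanC, hK0, hK1, XF_eq, h2, h3]
  simp (disch := fun_prop) only [pd_add, pd_sub, pd_const_mul, pd_mul, pd_coord1,
    pd_coord2, pd_const]
  simp (disch := fun_prop) only [pdc_e0_et, pdc_e1_et, pdc_e2_et, pdc_e1_e0, pdc_e2_e0,
    pdc_e2_e1]
  norm_num [et, e0, e1, e2]
  ring
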